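/- Fix p' ∈ ℝ₊₊^{2K}, and suppose w' ∈ ℝ₊₊^{2K} satisfies w' = λ'·f_{p'}(w') with λ' := 1/max{g₁(w'), g_{2,p'}(w')}, where g₁(w') = a < 1 and g_{2,p'}(w') = 1. Set p'' := a·p', and let w'' ∈ ℝ₊₊^{2K} be the unique vector satisfying w'' = λ''·f_{p''}(w'') with max{g₁(w''), g_{2,p''}(w'')} = 1 and λ'' := 1/max{g₁(f_{p''}(w'')), g_{2,p''}(f_{p''}(w''))}. Then λ'' > λ'. (This is the inductive step showing that iteratively scaling the power vector by the current load g₁ and recomputing the normalized fixed point produces a strictly increasing sequence of utilities until the full-load condition g₁(w) = 1 is reached.) -/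

import Mathlib

/-- Interference at link `l`: `I_l(p, w) = ((Ṽ · diag(p) · w)_l + σ²) / v_l`. -/
noncomputable def interf {K : ℕ} (V : Matrix (Fin (2 * K)) (Fin (2 * K)) ℝ)
    (v : Fin (2 * K) → ℝ) (σ2 : ℝ) (p w : Fin (2 * K) → ℝ) (l : Fin (2 * K)) : ℝ :=
  ((∑ j, V l j * (p j * w j)) + σ2) / v l

/-- `f_l(p, w) = d_l / (W₀ B log₂(1 + SINR_l(p, w)))` with `SINR_l = p_l / I_l(p, w)`. -/
noncomputable def rateF {K : ℕ} (V : Matrix (Fin (2 * K)) (Fin (2 * K)) ℝ)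
    (v : Fin (2 * K) → ℝ) (σ2 W0 B : ℝ) (d : Fin (2 * K) → ℝ)
    (p w : Fin (2 * K) → ℝ) (l : Fin (2 * K)) : ℝ :=
  d l / (W0 * B * Real.logb 2 (1 + p l / interf V v σ2 p w l))

/-- Load constraint `g₁(w) = ‖A w‖_∞`, where the 0/1 association matrix `A` with
exactly one 1 per column is encoded by the assignment map `asg` (link `l` is
associated to cell `asg l`). -/
noncomputable def gOne {K N : ℕ} (asg : Fin (2 * K) → Fin N) (w : Fin (2 * K) → ℝ) : ℝ :=
  ⨆ n : Fin N, ∑ l, if asg l = n then w l else 0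

/-- Power constraint `g₂(w, p) = W₀ · max_j (A^{ext} diag(w) p)_j / p^{max}_j`, with
the 0/1 matrix `A^{ext}` (one 1 per column) encoded by the assignment map `aext`. -/
noncomputable def gTwo {K N : ℕ} (aext : Fin (2 * K) → Fin (K + N))
    (pmax : Fin (K + N) → ℝ) (W0 : ℝ) (w p : Fin (2 * K) → ℝ) : ℝ :=
  W0 * ⨆ j : Fin (K + N), (∑ l, if aext l = j then w l * p l else 0) / pmax j

/-
With `λ' = 1`, the vector `u := c⁻¹ • w'` satisfies `f_{p''}(u) < u`: the interference seen by `u`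
at power `p'' = c • p'` equals that of `w'` at `p'`, so every SINR shrinks exactly by the factor `c`,
and by strict concavity of `log` the rate `log₂(1 + c s)` exceeds `c log₂(1 + s)`. The map
`f_{p''}` is monotone and scalable (`f(t w) < t f(w)` for `t > 1`), so any `w''` with
`w'' ≤ f_{p''}(w'')` — which is what `λ'' ≤ 1` would give — lies below `t • u` for some `t < 1`.
Both constraints are monotone and homogeneous in `w`, with value `1` at `u`, so they would be at
most `t < 1` at `w''`, contradicting the normalization of `w''`.
-/

open Real

theorem exists_lt_one_le_smul_of_le_map {ι : Type*} [Finite ι] [Nonempty ι]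
    {F : (ι → ℝ) → ι → ℝ} (hmono : ∀ x y, 0 ≤ x → x ≤ y → F x ≤ F y)
    (hscal : ∀ x, 0 ≤ x → ∀ t : ℝ, 1 < t → F (t • x) ≤ t • F x)
    {u w : ι → ℝ} (hu : ∀ i, 0 < u i) (hFu : ∀ i, F u i < u i)
    (hw : 0 ≤ w) (hwF : w ≤ F w) :
    ∃ t ∈ Set.Ico (0 : ℝ) 1, w ≤ t • u := by
  obtain ⟨i, hi⟩ := Finite.exists_max fun j => w j / u j
  set t := w i / u i
  have hwt : w ≤ t • u := fun j => (div_le_iff₀ (hu j)).mp (hi j)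
  refine ⟨t, ⟨div_nonneg (hw i) (hu i).le, ?_⟩, hwt⟩
  by_contra! ht
  have hu0 : 0 ≤ u := fun j => (hu j).le
  have hFtu : F (t • u) i ≤ t * F u i := by
    rcases ht.eq_or_lt with h1 | ht
    · simp [← h1]
    · exact hscal u hu0 t ht i
  have hwi : w i = t * u i := (div_mul_cancel₀ _ (hu i).ne').symm
  have hlt := calc w i ≤ F w i := hwF i
    _ ≤ F (t • u) i := hmono w _ hw hwt i
    _ ≤ t * F u i := hFtu
    _ < t * u i := mul_lt_mul_of_pos_left (hFu i) (by linarith)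
  exact hlt.ne hwi

theorem mul_logb_one_add_lt_logb_one_add_mul {b a s : ℝ} (hb : 1 < b) (ha0 : 0 < a)
    (ha1 : a < 1) (hs : 0 < s) : a * logb b (1 + s) < logb b (1 + a * s) := by
  have hconc := strictConcaveOn_log_Ioi.2 (x := 1 + s) (y := 1)
    (Set.mem_Ioi.2 (by linarith)) (Set.mem_Ioi.2 one_pos) (by linarith) ha0
    (sub_pos.2 ha1) (add_sub_cancel a 1)
  simp only [smul_eq_mul, log_one, mul_zero, add_zero, mul_one] at hconc
  rw [show a * (1 + s) + (1 - a) = 1 + a * s by ring] at hconc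
  unfold logb
  rw [← mul_div_assoc]
  exact div_lt_div_of_pos_right hconc (log_pos hb)

theorem div_mul_logb_one_add_lt_inv_mul {k e a s s' : ℝ} (hk : 0 < k) (he : 0 < e)
    (ha0 : 0 < a) (ha1 : a < 1) (hs : 0 < s) (hss' : a * s ≤ s') :
    e / (k * logb 2 (1 + s')) < a⁻¹ * (e / (k * logb 2 (1 + s))) := by
  have hlog : a * logb 2 (1 + s) < logb 2 (1 + s') :=
    (mul_logb_one_add_lt_logb_one_add_mul one_lt_two ha0 ha1 hs).trans_le
      (logb_le_logb_of_le one_lt_two (by positivity) (by linarith))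
  have hpos : 0 < a * logb 2 (1 + s) := mul_pos ha0 (logb_pos one_lt_two (by linarith))
  calc e / (k * logb 2 (1 + s')) < e / (k * (a * logb 2 (1 + s))) :=
        div_lt_div_of_pos_left he (by positivity) (mul_lt_mul_of_pos_left hlog hk)
    _ = a⁻¹ * (e / (k * logb 2 (1 + s))) := by field_simp

section Rate

variable {K : ℕ} {V : Matrix (Fin (2 * K)) (Fin (2 * K)) ℝ} {v : Fin (2 * K) → ℝ}
  {σ2 W0 B : ℝ} {d p w x : Fin (2 * K) → ℝ}

theorem interf_pos (hV : ∀ i j, 0 ≤ V i j) (hv : ∀ i, 0 < v i) (hσ2 : 0 < σ2)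
    (hp : 0 ≤ p) (hw : 0 ≤ w) (l : Fin (2 * K)) : 0 < interf V v σ2 p w l := by
  have : 0 ≤ ∑ j, V l j * (p j * w j) :=
    Finset.sum_nonneg fun j _ => mul_nonneg (hV l j) (mul_nonneg (hp j) (hw j))
  exact div_pos (by linarith) (hv l)

theorem interf_mono (hV : ∀ i j, 0 ≤ V i j) (hv : ∀ i, 0 < v i) (hp : 0 ≤ p) (hwx : w ≤ x)
    (l : Fin (2 * K)) : interf V v σ2 p w l ≤ interf V v σ2 p x l := by
  unfold interf
  gcongr with j
  · exact hv l |>.le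
  · exact hV l j
  · exact hp j
  · exact hwx j

theorem interf_smul_lt (hV : ∀ i j, 0 ≤ V i j) (hv : ∀ i, 0 < v i) (hσ2 : 0 < σ2)
    (hp : 0 ≤ p) (hw : 0 ≤ w) {t : ℝ} (ht : 1 < t) (l : Fin (2 * K)) :
    interf V v σ2 p (t • w) l < t * interf V v σ2 p w l := by
  have hsum : 0 ≤ ∑ j, V l j * (p j * w j) :=
    Finset.sum_nonneg fun j _ => mul_nonneg (hV l j) (mul_nonneg (hp j) (hw j))
  have hsmul : ∑ j, V l j * (p j * (t • w) j) = t * ∑ j, V l j * (p j * w j) := by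
    rw [Finset.mul_sum]
    exact Finset.sum_congr rfl fun j _ => by simp only [Pi.smul_apply, smul_eq_mul]; ring
  unfold interf
  rw [hsmul, ← mul_div_assoc]
  exact div_lt_div_of_pos_right (by nlinarith) (hv l)

theorem interf_smul_inv_smul {c : ℝ} (hc : c ≠ 0) (l : Fin (2 * K)) :
    interf V v σ2 (c • p) (c⁻¹ • w) l = interf V v σ2 p w l := by
  simp only [interf, Pi.smul_apply, smul_eq_mul]
  congr 2
  exact Finset.sum_congr rfl fun j _ => by field_simp

theorem rateF_pos (hV : ∀ i j, 0 ≤ V i j) (hv : ∀ i, 0 < v i) (hσ2 : 0 < σ2) (hW0 : 0 < W0)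
    (hB : 0 < B) (hd : ∀ i, 0 < d i) (hp : ∀ i, 0 < p i) (hw : 0 ≤ w) (l : Fin (2 * K)) :
    0 < rateF V v σ2 W0 B d p w l := by
  have hs := div_pos (hp l) (interf_pos hV hv hσ2 (fun i => (hp i).le) hw l)
  have := logb_pos one_lt_two (by linarith : 1 < 1 + p l / interf V v σ2 p w l)
  exact div_pos (hd l) (by positivity)

theorem rateF_mono (hV : ∀ i j, 0 ≤ V i j) (hv : ∀ i, 0 < v i) (hσ2 : 0 < σ2) (hW0 : 0 < W0)
    (hB : 0 < B) (hd : ∀ i, 0 < d i) (hp : ∀ i, 0 < p i) (hw : 0 ≤ w) (hwx : w ≤ x) :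
    rateF V v σ2 W0 B d p w ≤ rateF V v σ2 W0 B d p x := by
  intro l
  have hp0 : 0 ≤ p := fun i => (hp i).le
  have hIw := interf_pos hV hv hσ2 hp0 hw l
  have hIx := interf_pos hV hv hσ2 hp0 (hw.trans hwx) l
  have hsx := div_pos (hp l) hIx
  have hsinr : p l / interf V v σ2 p x l ≤ p l / interf V v σ2 p w l :=
    div_le_div_of_nonneg_left (hp l).le hIw (interf_mono hV hv hp0 hwx l)
  have := logb_pos one_lt_two (by linarith : 1 < 1 + p l / interf V v σ2 p x l)
  unfold rateF
  gcongr
  · exact (hd l).le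
  · exact one_lt_two

theorem rateF_smul_le (hV : ∀ i j, 0 ≤ V i j) (hv : ∀ i, 0 < v i) (hσ2 : 0 < σ2)
    (hW0 : 0 < W0) (hB : 0 < B) (hd : ∀ i, 0 < d i) (hp : ∀ i, 0 < p i) (hw : 0 ≤ w)
    {t : ℝ} (ht : 1 < t) : rateF V v σ2 W0 B d p (t • w) ≤ t • rateF V v σ2 W0 B d p w := by
  intro l
  have hp0 : 0 ≤ p := fun i => (hp i).le
  have ht0 : 0 < t := by linarith
  have hI := interf_pos hV hv hσ2 hp0 hw l
  have hsinr : t⁻¹ * (p l / interf V v σ2 p w l) ≤ p l / interf V v σ2 p (t • w) l := by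
    rw [← div_eq_inv_mul, div_div, mul_comm]
    exact div_le_div_of_nonneg_left (hp l).le (interf_pos hV hv hσ2 hp0 (smul_nonneg ht0.le hw) l)
      (interf_smul_lt hV hv hσ2 hp0 hw ht l).le
  have := div_mul_logb_one_add_lt_inv_mul (mul_pos hW0 hB) (hd l) (inv_pos.2 ht0)
    (inv_lt_one_of_one_lt₀ ht) (div_pos (hp l) hI) hsinr
  rw [inv_inv] at this
  exact this.le

theorem rateF_smul_smul_inv_lt (hV : ∀ i j, 0 ≤ V i j) (hv : ∀ i, 0 < v i) (hσ2 : 0 < σ2)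
    (hW0 : 0 < W0) (hB : 0 < B) (hd : ∀ i, 0 < d i) (hp : ∀ i, 0 < p i) (hw : 0 ≤ w)
    {c : ℝ} (hc0 : 0 < c) (hc1 : c < 1) (l : Fin (2 * K)) :
    rateF V v σ2 W0 B d (c • p) (c⁻¹ • w) l < c⁻¹ * rateF V v σ2 W0 B d p w l := by
  have hI := interf_pos hV hv hσ2 (fun i => (hp i).le) hw l
  have hsinr : (c • p) l / interf V v σ2 (c • p) (c⁻¹ • w) l
      = c * (p l / interf V v σ2 p w l) := by
    rw [interf_smul_inv_smul hc0.ne', Pi.smul_apply, smul_eq_mul, mul_div_assoc]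
  unfold rateF
  rw [hsinr]
  exact div_mul_logb_one_add_lt_inv_mul (mul_pos hW0 hB) (hd l) hc0 hc1 (div_pos (hp l) hI) le_rfl

end Rate

section Constraints

variable {K N : ℕ} {x y : Fin (2 * K) → ℝ}

theorem le_gOne (asg : Fin (2 * K) → Fin N) (hx : 0 ≤ x) (l : Fin (2 * K)) :
    x l ≤ gOne asg x :=
  calc x l ≤ ∑ i, if asg i = asg l then x i else 0 := by
        simpa using Finset.single_le_sum (f := fun i => if asg i = asg l then x i else 0)
          (fun i _ => by split_ifs; exacts [hx i, le_rfl]) (Finset.mem_univ l)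
    _ ≤ gOne asg x := le_ciSup (f := fun n => ∑ i, if asg i = n then x i else 0)
        (Finite.bddAbove_range _) (asg l)

theorem gOne_mono (asg : Fin (2 * K) → Fin N) (hxy : x ≤ y) : gOne asg x ≤ gOne asg y :=
  ciSup_mono (Finite.bddAbove_range _) fun _ =>
    Finset.sum_le_sum fun i _ => by split_ifs <;> simp [hxy i]

theorem gOne_smul (asg : Fin (2 * K) → Fin N) {t : ℝ} (ht : 0 ≤ t) :
    gOne asg (t • x) = t * gOne asg x := by
  simp only [gOne, Real.mul_iSup_of_nonneg ht, Finset.mul_sum, mul_ite, mul_zero,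
    Pi.smul_apply, smul_eq_mul]

variable (aext : Fin (2 * K) → Fin (K + N)) {pmax : Fin (K + N) → ℝ} {W0 : ℝ}
  {p : Fin (2 * K) → ℝ}

theorem gTwo_mono (hW0 : 0 ≤ W0) (hpmax : ∀ j, 0 ≤ pmax j) (hp : 0 ≤ p) (hxy : x ≤ y) :
    gTwo aext pmax W0 x p ≤ gTwo aext pmax W0 y p := by
  refine mul_le_mul_of_nonneg_left (ciSup_mono (Finite.bddAbove_range _) fun j => ?_) hW0
  gcongr with i
  · exact hpmax j
  · split_ifs
    · exact mul_le_mul_of_nonneg_right (hxy i) (hp i)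
    · rfl

theorem gTwo_smul {t : ℝ} (ht : 0 ≤ t) :
    gTwo aext pmax W0 (t • x) p = t * gTwo aext pmax W0 x p := by
  simp only [gTwo, Real.mul_iSup_of_nonneg ht, mul_div_assoc', Finset.mul_sum, mul_ite,
    mul_zero, Pi.smul_apply, smul_eq_mul, mul_assoc, mul_left_comm t W0]

theorem gTwo_smul_inv_smul {c : ℝ} (hc : c ≠ 0) :
    gTwo aext pmax W0 (c⁻¹ • x) (c • p) = gTwo aext pmax W0 x p := by
  simp only [gTwo, Pi.smul_apply, smul_eq_mul]
  congr! 6 with j i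
  field_simp

end Constraints

theorem power_scaling_increases_utility_general (K N : ℕ) (hK : 1 ≤ K)
    (V : Matrix (Fin (2 * K)) (Fin (2 * K)) ℝ) (hV : ∀ i j, 0 ≤ V i j)
    (v : Fin (2 * K) → ℝ) (hv : ∀ i, 0 < v i)
    (σ2 : ℝ) (hσ2 : 0 < σ2) (W0 B : ℝ) (hW0 : 0 < W0) (hB : 0 < B)
    (d : Fin (2 * K) → ℝ) (hd : ∀ i, 0 < d i)
    (asg : Fin (2 * K) → Fin N) (aext : Fin (2 * K) → Fin (K + N))
    (pmax : Fin (K + N) → ℝ) (hpmax : ∀ j, 0 < pmax j)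
    (p' : Fin (2 * K) → ℝ) (hp' : ∀ i, 0 < p' i)
    (w' : Fin (2 * K) → ℝ) (hw' : ∀ i, 0 < w' i) (lam' : ℝ)
    (hlam' : lam' = 1 / max (gOne asg w') (gTwo aext pmax W0 w' p'))
    (hfix' : ∀ l, w' l = lam' * rateF V v σ2 W0 B d p' w' l)
    (c : ℝ) (hc : gOne asg w' = c) (hclt : c < 1)
    (hg2 : gTwo aext pmax W0 w' p' = 1)
    (w'' : Fin (2 * K) → ℝ) (hw'' : ∀ i, 0 < w'' i) (lam'' : ℝ)
    (hfix'' : ∀ l, w'' l = lam'' * rateF V v σ2 W0 B d (c • p') w'' l)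
    (hunit'' : max (gOne asg w'') (gTwo aext pmax W0 w'' (c • p')) = 1) :
    lam' < lam'' := by
  have : Nonempty (Fin (2 * K)) := ⟨⟨0, by omega⟩⟩
  have hlam'1 : lam' = 1 := by rw [hlam', hc, hg2, max_eq_right hclt.le, div_one]
  have hc0 : 0 < c := hc ▸ (hw' ⟨0, by omega⟩).trans_le (le_gOne asg (fun i => (hw' i).le) _)
  have hcp : ∀ i, 0 < (c • p') i := fun i => mul_pos hc0 (hp' i)
  set u := c⁻¹ • w'
  have hu : ∀ i, 0 < u i := fun i => mul_pos (inv_pos.2 hc0) (hw' i)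
  have hFu : ∀ l, rateF V v σ2 W0 B d (c • p') u l < u l := fun l => by
    have := rateF_smul_smul_inv_lt hV hv hσ2 hW0 hB hd hp' (fun i => (hw' i).le) hc0 hclt l
    rwa [← one_mul (rateF V v σ2 W0 B d p' w' l), ← hlam'1, ← hfix' l] at this
  rw [hlam'1]
  by_contra! hlam''1
  have hwF : w'' ≤ rateF V v σ2 W0 B d (c • p') w'' := fun l => by
    have := rateF_pos hV hv hσ2 hW0 hB hd hcp (fun i => (hw'' i).le) l
    rw [hfix'' l]
    exact mul_le_of_le_one_left this.le hlam''1
  obtain ⟨t, ⟨ht0, ht1⟩, hwt⟩ := exists_lt_one_le_smul_of_le_map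
    (fun _ _ hx hxy => rateF_mono hV hv hσ2 hW0 hB hd hcp hx hxy)
    (fun x hx t ht => rateF_smul_le hV hv hσ2 hW0 hB hd hcp hx ht)
    hu hFu (fun i => (hw'' i).le) hwF
  have hg1'' : gOne asg w'' ≤ t :=
    calc gOne asg w'' ≤ gOne asg (t • u) := gOne_mono asg hwt
      _ = t := by rw [gOne_smul asg ht0, gOne_smul asg (inv_nonneg.2 hc0.le), hc,
          inv_mul_cancel₀ hc0.ne', mul_one]
  have hg2'' : gTwo aext pmax W0 w'' (c • p') ≤ t :=
    calc gTwo aext pmax W0 w'' (c • p') ≤ gTwo aext pmax W0 (t • u) (c • p') :=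
          gTwo_mono aext hW0.le (fun j => (hpmax j).le) (fun i => (hcp i).le) hwt
      _ = t := by rw [gTwo_smul aext ht0, gTwo_smul_inv_smul aext hc0.ne', hg2, mul_one]
  linarith [max_le hg1'' hg2'']

/-- Proposition 2, inductive step: if the normalized fixed point `w'`
for power `p'` has load `g₁(w') = c < 1` and power usage `g_{2,p'}(w') = 1`, then the
normalized fixed point `w''` for the scaled power `p'' = c·p'` achieves a strictly
larger utility: `λ'' > λ'`. -/
theorem power_scaling_increases_utility (K N : ℕ) (hK : 1 ≤ K) (hN : 1 ≤ N)
    (V : Matrix (Fin (2 * K)) (Fin (2 * K)) ℝ) (hV : ∀ i j, 0 ≤ V i j)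
    (v : Fin (2 * K) → ℝ) (hv : ∀ i, 0 < v i)
    (σ2 : ℝ) (hσ2 : 0 < σ2) (W0 B : ℝ) (hW0 : 0 < W0) (hB : 0 < B)
    (d : Fin (2 * K) → ℝ) (hd : ∀ i, 0 < d i)
    (asg : Fin (2 * K) → Fin N) (aext : Fin (2 * K) → Fin (K + N))
    (pmax : Fin (K + N) → ℝ) (hpmax : ∀ j, 0 < pmax j)
    (p' : Fin (2 * K) → ℝ) (hp' : ∀ i, 0 < p' i)
    (w' : Fin (2 * K) → ℝ) (hw' : ∀ i, 0 < w' i) (lam' : ℝ)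
    (hlam' : lam' = 1 / max (gOne asg w') (gTwo aext pmax W0 w' p'))
    (hfix' : ∀ l, w' l = lam' * rateF V v σ2 W0 B d p' w' l)
    (c : ℝ) (hc : gOne asg w' = c) (hclt : c < 1)
    (hg2 : gTwo aext pmax W0 w' p' = 1)
    (w'' : Fin (2 * K) → ℝ) (hw'' : ∀ i, 0 < w'' i) (lam'' : ℝ)
    (hlam'' : lam'' = 1 / max
      (gOne asg (fun l => rateF V v σ2 W0 B d (c • p') w'' l))
      (gTwo aext pmax W0 (fun l => rateF V v σ2 W0 B d (c • p') w'' l) (c • p')))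
    (hfix'' : ∀ l, w'' l = lam'' * rateF V v σ2 W0 B d (c • p') w'' l)
    (hunit'' : max (gOne asg w'') (gTwo aext pmax W0 w'' (c • p')) = 1) :
    lam' < lam'' :=
  power_scaling_increases_utility_general K N hK V hV v hv σ2 hσ2 W0 B hW0 hB d hd asg aext pmax
    hpmax p' hp' w' hw' lam' hlam' hfix' c hc hclt hg2 w'' hw'' lam'' hfix'' hunit''
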